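/- arXiv:2203.00521 — 2 statements merged into one kernel-verified Lean document; each statement's English description precedes it below -/
import Mathlib

section
/- Let D be a DAG on a finite vertex set V with unconditional dependence graph U^D. Then the set ma_D(V) of source nodes of D is a maximum independent set of U^D: no two source nodes are adjacent in U^D, and every independent set of U^D has cardinality at most |ma_D(V)|. -/
namespace UEC

variable {V : Type*}

/-- A directed graph is a DAG if it has no directed cycles. -/
def IsDAG (D : Digraph V) : Prop := ∀ v : V, ¬ Relation.TransGen D.Adj v v

/-- `an D v` : the set of ancestors of `v` (nodes with a directed path to `v`),
including `v` itself. -/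
def an (D : Digraph V) (v : V) : Set V := {u | Relation.ReflTransGen D.Adj u v}

/-- `de D v` : the set of descendants of `v` (nodes reachable by a directed path
from `v`), including `v` itself. -/
def de (D : Digraph V) (v : V) : Set V := {u | Relation.ReflTransGen D.Adj v u}

/-- `pa D v` : the set of parents of `v`. -/
def pa (D : Digraph V) (v : V) : Set V := {u | D.Adj u v}

/-- A source node is a node with no parents. -/
def IsSource (D : Digraph V) (v : V) : Prop := pa D v = ∅

/-- `sources D` : the set of source nodes of `D` (denoted `ma_D(V)` in the paper). -/
def sources (D : Digraph V) : Set V := {v | IsSource D v}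

/-- Ancestors of a set of nodes. -/
def anSet (D : Digraph V) (A : Set V) : Set V := ⋃ a ∈ A, an D a

/-- `maSet D A = {u ∈ an_D(A) : an_D(u) = {u}}`, the source nodes that are
ancestors of `A`. -/
def maSet (D : Digraph V) (A : Set V) : Set V :=
  {u | u ∈ anSet D A ∧ an D u = {u}}

/-- Two nodes are adjacent in a digraph if there is an edge between them in
either direction. -/
def Adjacent (D : Digraph V) (v w : V) : Prop := D.Adj v w ∨ D.Adj w v

/-- A trek in `D` is a path over distinct vertices (given as the list of its
vertices, consecutive ones being adjacent) containing no collider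
`p i → p (i+1) ← p (i+2)` as a subpath. -/
def IsTrekList (D : Digraph V) (p : List V) : Prop :=
  p.Nodup ∧
    (∀ i : ℕ, (h : i + 1 < p.length) →
      (D.Adj (p.get ⟨i, by omega⟩) (p.get ⟨i + 1, h⟩) ∨
        D.Adj (p.get ⟨i + 1, h⟩) (p.get ⟨i, by omega⟩))) ∧
    (∀ i : ℕ, (h : i + 2 < p.length) →
      ¬(D.Adj (p.get ⟨i, by omega⟩) (p.get ⟨i + 1, by omega⟩) ∧
        D.Adj (p.get ⟨i + 2, h⟩) (p.get ⟨i + 1, by omega⟩)))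

/-- There is a trek between `v` and `w` in `D`. -/
def HasTrek (D : Digraph V) (v w : V) : Prop :=
  ∃ p : List V, IsTrekList D p ∧ p.head? = some v ∧ p.getLast? = some w

/-- Adjacency in the unconditional dependence graph `U^D` : two distinct nodes
are adjacent iff there is a trek between them. -/
def UAdj (D : Digraph V) (v w : V) : Prop :=
  v ≠ w ∧ (HasTrek D v w ∨ HasTrek D w v)

/-- Two digraphs on the same vertex set are unconditionally equivalent if for
all distinct nodes there is a trek between them in one iff there is one in the
other. -/
def UncondEquiv (D D' : Digraph V) : Prop :=
  ∀ v w : V, v ≠ w → (HasTrek D v w ↔ HasTrek D' v w)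

/-- The digraph obtained by adding the edge `v → w`. -/
def addEdge (D : Digraph V) (v w : V) : Digraph V :=
  ⟨fun a b => D.Adj a b ∨ (a = v ∧ b = w)⟩

/-- The digraph obtained by deleting the edge `v → w`. -/
def delEdge (D : Digraph V) (v w : V) : Digraph V :=
  ⟨fun a b => D.Adj a b ∧ ¬(a = v ∧ b = w)⟩

/-- The digraph obtained by replacing the edge `v → w` with `w → v`. -/
def revEdge (D : Digraph V) (v w : V) : Digraph V :=
  ⟨fun a b => (D.Adj a b ∧ ¬(a = v ∧ b = w)) ∨ (a = w ∧ b = v)⟩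

/-- The ordered pair `(v, w)` is partially weakly covered in `D`. -/
def PartiallyWeaklyCovered (D : Digraph V) (v w : V) : Prop :=
  maSet D {v} ⊆ maSet D {w} ∧ v ∉ an D w ∧ w ∉ an D v ∧ pa D v ≠ ∅

/-- The ordered pair `(v, w)` is implied by transitivity in `D`, i.e.
`v ∈ an_D(w) \ ({w} ∪ pa_D(w))`. -/
def ImpliedByTransitivity (D : Digraph V) (v w : V) : Prop :=
  v ∈ an D w \ ({w} ∪ pa D w)

/-- The edge `v → w` is weakly covered in `D`. -/
def WeaklyCovered (D : Digraph V) (v w : V) : Prop :=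
  maSet D (pa D v) = maSet D (pa D w \ {v}) ∧ v ∉ anSet D (pa D w \ {v})

/-!
A trek out of a source must leave it along an out-edge, and since a trek has no colliders every
later edge is oriented forward as well; a trek between two sources would thus be a directed path
into a source. Conversely, every node has a source ancestor, and two nodes with a common ancestor
are joined by a trek: take directed paths from the ancestor to each, made internally disjoint by
restarting at a shared vertex, and glue one reversed to the other. So sending each node to a source
ancestor is injective on an independent set of `U^D`.
-/

section

variable {α : Type*} {r : α → α → Prop}

/-- Restarting at a shared vertex shortens both paths, so induction on the total length ends at
disjoint ones. -/
theorem _root_.List.exists_disjoint_isChain_of_isChain {t : α} {lv lw : List α}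
    (hv : (t :: lv).IsChain r) (hw : (t :: lw).IsChain r) :
    ∃ s lv' lw', (s :: lv').IsChain r ∧ (s :: lw').IsChain r ∧
      (s :: lv').getLast? = (t :: lv).getLast? ∧ (s :: lw').getLast? = (t :: lw).getLast? ∧
      lv'.Disjoint lw' := by
  induction hn : lv.length + lw.length using Nat.strong_induction_on generalizing t lv lw with
  | _ n ih =>
  by_cases hshared : ∃ x ∈ lv, x ∈ lw
  swap
  · exact ⟨t, lv, lw, hv, hw, rfl, rfl, fun x hxv hxw => hshared ⟨x, hxv, hxw⟩⟩
  obtain ⟨x, hxv, hxw⟩ := hshared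
  obtain ⟨av, bv, rfl⟩ := List.mem_iff_append.mp hxv
  obtain ⟨aw, bw, rfl⟩ := List.mem_iff_append.mp hxw
  have hv' : (x :: bv).IsChain r := List.IsChain.right_of_append (l₁ := t :: av) hv
  have hw' : (x :: bw).IsChain r := List.IsChain.right_of_append (l₁ := t :: aw) hw
  obtain ⟨s, lv', lw', h⟩ := ih (bv.length + bw.length) (by simp at hn; omega) hv' hw' rfl
  simp only [← List.cons_append, List.getLast?_append_cons]
  exact ⟨s, lv', lw', h⟩

end

section

variable {D : Digraph V}

theorem IsDAG.asymm (hD : IsDAG D) {a b : V} (hab : D.Adj a b) : ¬ D.Adj b a :=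
  fun hba => hD a (.head hab (.single hba))

theorem IsDAG.nodup_of_isChain (hD : IsDAG D) {l : List V} (hl : l.IsChain D.Adj) : l.Nodup :=
  haveI : Std.Irrefl (Relation.TransGen D.Adj) := ⟨hD⟩
  (hl.imp fun _ _ => Relation.TransGen.single).pairwise.nodup

theorem IsDAG.wellFounded [Finite V] (hD : IsDAG D) : WellFounded D.Adj :=
  haveI : Std.Irrefl (Relation.TransGen D.Adj) := ⟨hD⟩
  Subrelation.wf Relation.TransGen.single (Finite.wellFounded_of_trans_of_irrefl _)

theorem exists_isSource_ancestor [Finite V] (hD : IsDAG D) (v : V) :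
    ∃ s, IsSource D s ∧ Relation.ReflTransGen D.Adj s v := by
  induction v using hD.wellFounded.induction with
  | _ v ih =>
  by_cases hv : IsSource D v
  · exact ⟨v, hv, .refl⟩
  obtain ⟨u, hu⟩ := Set.nonempty_iff_ne_empty.mpr hv
  obtain ⟨s, hs, hsu⟩ := ih u hu
  exact ⟨s, hs, hsu.tail hu⟩

theorem isTrekList_of_isChain (hD : IsDAG D) {l : List V} (hl : l.IsChain D.Adj) :
    IsTrekList D l := by
  have hfwd := List.isChain_iff_getElem.mp hl
  refine ⟨hD.nodup_of_isChain hl, fun i hi => .inl (by simpa using hfwd i hi), ?_⟩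
  intro i hi hcol
  exact hD.asymm (by simpa using hfwd (i + 1) hi) (by simpa using hcol.2)

theorem IsTrekList.cons (hD : IsDAG D) {a b : V} {L : List V} (hT : IsTrekList D (b :: L))
    (hba : D.Adj b a) (ha : a ∉ b :: L) : IsTrekList D (a :: b :: L) := by
  obtain ⟨hnd, hedge, hcol⟩ := hT
  refine ⟨List.nodup_cons.mpr ⟨ha, hnd⟩, ?_, ?_⟩
  · rintro (_ | i) h
    · exact .inr hba
    · exact hedge i (by simp at h ⊢; omega)
  · rintro (_ | i) h hc
    · exact hD.asymm hba hc.1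
    · exact hcol i (by simp at h ⊢; omega) hc

/-- Walking back along a directed path out of the head of a trek only adds edges pointing away
from the new vertices, so it creates no collider. -/
theorem isTrekList_reverse_append (hD : IsDAG D) {t : V} {l L : List V}
    (hl : (t :: l).IsChain D.Adj) (hL : IsTrekList D (t :: L)) (hdisj : l.Disjoint L) :
    IsTrekList D (l.reverse ++ t :: L) := by
  induction l generalizing t L with
  | nil => simpa using hL
  | cons x l ih =>
    have hnd := hD.nodup_of_isChain hl
    simp only [List.nodup_cons, List.mem_cons, not_or] at hnd
    rw [List.isChain_cons_cons] at hl
    have hxL : IsTrekList D (x :: t :: L) :=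
      hL.cons hD hl.1 (by simpa [not_or] using ⟨Ne.symm hnd.1.1, hdisj (List.mem_cons_self ..)⟩)
    have := ih hl.2 hxL <| by
      simpa [List.disjoint_cons_right] using ⟨hnd.1.2, (List.disjoint_cons_left.mp hdisj).2⟩
    simpa using this

theorem hasTrek_of_common_ancestor (hD : IsDAG D) {t v w : V}
    (hv : Relation.ReflTransGen D.Adj t v) (hw : Relation.ReflTransGen D.Adj t w) :
    HasTrek D v w := by
  obtain ⟨lv, hcv, hlv⟩ := List.exists_isChain_cons_of_relationReflTransGen hv
  obtain ⟨lw, hcw, hlw⟩ := List.exists_isChain_cons_of_relationReflTransGen hw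
  obtain ⟨s, lv', lw', hcv', hcw', hlv', hlw', hdisj⟩ :=
    List.exists_disjoint_isChain_of_isChain hcv hcw
  rw [List.getLast?_eq_some_getLast (List.cons_ne_nil t lv), hlv] at hlv'
  rw [List.getLast?_eq_some_getLast (List.cons_ne_nil t lw), hlw] at hlw'
  refine ⟨lv'.reverse ++ s :: lw',
    isTrekList_reverse_append hD hcv' (isTrekList_of_isChain hD hcw') hdisj, ?_, ?_⟩
  · simpa [List.head?_append, List.head?_reverse, List.getLast?_cons] using hlv'
  · rwa [List.getLast?_append_cons]

theorem IsSource.not_adj {m : V} (hm : IsSource D m) (u : V) : ¬ D.Adj u m :=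
  Set.eq_empty_iff_forall_notMem.mp hm u

/-- The first edge of a trek out of a source points away from it, and the absence of colliders
propagates that orientation along the whole trek. -/
theorem IsTrekList.isChain_of_isSource {m : V} {l : List V} (hT : IsTrekList D (m :: l))
    (hm : IsSource D m) : (m :: l).IsChain D.Adj := by
  obtain ⟨-, hedge, hcol⟩ := hT
  have hfwd : ∀ i (h : i + 1 < (m :: l).length),
      D.Adj ((m :: l).get ⟨i, by omega⟩) ((m :: l).get ⟨i + 1, h⟩) := by
    intro i
    induction i with
    | zero => exact fun h => (hedge 0 h).resolve_right (hm.not_adj _)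
    | succ j ih =>
      exact fun h => (hedge (j + 1) h).resolve_right fun hbwd => hcol j h ⟨ih _, hbwd⟩
  exact List.isChain_iff_getElem.mpr fun i h => by simpa using hfwd i h

theorem not_hasTrek_of_isSource {m m' : V} (hm : IsSource D m) (hm' : IsSource D m')
    (hne : m ≠ m') : ¬ HasTrek D m m' := by
  rintro ⟨_ | ⟨c, l⟩, hT, hhead, hlast⟩
  · simp at hhead
  obtain rfl : c = m := by simpa using hhead
  rw [List.getLast?_eq_some_getLast (List.cons_ne_nil _ _), Option.some.injEq] at hlast
  have hpath := List.relationReflTransGen_of_exists_isChain_cons l (hT.isChain_of_isSource hm) hlast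
  rcases hpath.cases_tail with rfl | ⟨u, -, hu⟩
  exacts [hne rfl, hm'.not_adj u hu]

end

/-- For a DAG `D` on a finite vertex set, the set of source
nodes is a maximum independent set of the unconditional dependence graph
`U^D`: no two source nodes are adjacent in `U^D`, and every independent set of
`U^D` has cardinality at most the number of source nodes. -/
theorem sources_maximum_independent_set [Fintype V] (D : Digraph V)
    (hD : IsDAG D) :
    (∀ m ∈ sources D, ∀ m' ∈ sources D, m ≠ m' → ¬ UAdj D m m') ∧
    (∀ I : Set V, (∀ a ∈ I, ∀ b ∈ I, a ≠ b → ¬ UAdj D a b) →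
      I.ncard ≤ (sources D).ncard) := by
  constructor
  · rintro m hm m' hm' hne ⟨-, h | h⟩
    exacts [not_hasTrek_of_isSource hm hm' hne h, not_hasTrek_of_isSource hm' hm hne.symm h]
  · intro I hI
    choose f hf_src hf_anc using exists_isSource_ancestor hD
    refine Set.ncard_le_ncard_of_injOn f (fun a _ => hf_src a) ?_ (Set.toFinite _)
    intro a ha b hb hab
    by_contra hne
    have hab_trek := hasTrek_of_common_ancestor hD (hf_anc a) (hab ▸ hf_anc b)
    exact hI a ha b hb hne ⟨hne, .inl hab_trek⟩

end UEC
end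

section
/- Let D be a DAG on a finite vertex set V, let v, w be distinct nonadjacent nodes such that (v, w) is partially weakly covered or implied by transitivity in D, and let D̄ be the DAG obtained from D by adding the edge v → w. Then for every node u, ma_{D̄}({u}) = ma_D({u}); in particular, D and D̄ have the same set of source nodes and every node has the same set of source-node ancestors in D and in D̄. -/
namespace UEC

variable {V : Type*}

/-!
Adding `v → w` gives a node `b` the new ancestors `an v` exactly when `w ∈ an b`. In both
cases every source above `v` already lies above `w`, hence above `b`, so no node gains a source
ancestor. Moreover `w` has a proper ancestor (for a partially weakly covered pair: a source
above `v`, which is not `w` because `w ∉ an v`), so `w` is no source and the new edge creates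
or destroys none.
-/

lemma mem_maSet_singleton {D : Digraph V} {u s : V} :
    s ∈ maSet D {u} ↔ s ∈ an D u ∧ an D s = {s} := by
  simp [maSet, anSet]

lemma an_eq_singleton_of_pa_eq_empty {D : Digraph V} {s : V} (h : pa D s = ∅) :
    an D s = {s} := by
  ext a
  refine ⟨fun ha => ?_, fun ha => ha ▸ Relation.ReflTransGen.refl⟩
  rcases Relation.ReflTransGen.cases_tail ha with rfl | ⟨c, -, hcs⟩
  · rfl
  · exact absurd (show c ∈ pa D s from hcs) (h ▸ Set.notMem_empty c)

lemma notMem_sources_of_an_ne_singleton {D : Digraph V} {w : V} (h : an D w ≠ {w}) :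
    w ∉ sources D :=
  fun hw => h (an_eq_singleton_of_pa_eq_empty hw)

lemma IsDAG.exists_mem_an_eq_singleton [Finite V] {D : Digraph V} (hD : IsDAG D) (x : V) :
    ∃ s ∈ an D x, an D s = {s} := by
  have : Std.Irrefl (Relation.TransGen D.Adj) := ⟨hD⟩
  induction x using (Finite.wellFounded_of_trans_of_irrefl (Relation.TransGen D.Adj)).induction
    with
  | _ x ih =>
    by_cases hx : pa D x = ∅
    · exact ⟨x, Relation.ReflTransGen.refl, an_eq_singleton_of_pa_eq_empty hx⟩
    · obtain ⟨p, hp⟩ := Set.nonempty_iff_ne_empty.2 hx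
      obtain ⟨s, hsp, hs⟩ := ih p (Relation.TransGen.single hp)
      exact ⟨s, hsp.tail hp, hs⟩

section addEdge

variable {D : Digraph V} {v w : V}

lemma mem_an_addEdge {a b : V} :
    a ∈ an (addEdge D v w) b ↔ a ∈ an D b ∨ (a ∈ an D v ∧ w ∈ an D b) := by
  have hmono : ∀ {x y}, Relation.ReflTransGen D.Adj x y →
      Relation.ReflTransGen (addEdge D v w).Adj x y :=
    Relation.ReflTransGen.mono (fun _ _ => Or.inl) _ _
  constructor
  · intro h
    induction h with
    | refl => exact Or.inl Relation.ReflTransGen.refl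
    | tail _ hcb ih =>
      rcases hcb with hcb | ⟨rfl, rfl⟩
      · exact ih.imp (·.tail hcb) (And.imp_right (·.tail hcb))
      · exact Or.inr ⟨ih.elim id And.left, Relation.ReflTransGen.refl⟩
  · rintro (h | ⟨hav, hwb⟩)
    · exact hmono h
    · exact ((hmono hav).tail (Or.inr ⟨rfl, rfl⟩)).trans (hmono hwb)

lemma an_addEdge_eq_singleton_iff (hw : an D w ≠ {w}) {s : V} :
    an (addEdge D v w) s = {s} ↔ an D s = {s} := by
  have hsub : an D s ⊆ an (addEdge D v w) s := fun a ha => mem_an_addEdge.2 (Or.inl ha)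
  constructor
  · intro h
    exact Set.Subset.antisymm (h ▸ hsub) (Set.singleton_subset_iff.2 Relation.ReflTransGen.refl)
  · intro h
    refine Set.Subset.antisymm (fun a ha => ?_) (h ▸ hsub)
    rcases mem_an_addEdge.1 ha with ha | ⟨-, hws⟩
    · exact h ▸ ha
    · rw [h, Set.mem_singleton_iff] at hws
      exact absurd (hws ▸ h) hw

theorem maSet_addEdge_singleton (hw : an D w ≠ {w}) (hvw : maSet D {v} ⊆ an D w) (u : V) :
    maSet (addEdge D v w) {u} = maSet D {u} := by
  ext s
  simp only [mem_maSet_singleton, an_addEdge_eq_singleton_iff hw, mem_an_addEdge,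
    and_congr_left_iff, or_iff_left_iff_imp, and_imp]
  intro hs hsv hwu
  exact (hvw (mem_maSet_singleton.2 ⟨hsv, hs⟩)).trans hwu

theorem sources_addEdge (hw : w ∉ sources D) : sources (addEdge D v w) = sources D := by
  ext x
  simp only [sources, IsSource, pa, addEdge, Set.mem_ofPred_eq, Set.eq_empty_iff_forall_notMem,
    not_or, forall_and]
  refine and_iff_left_of_imp fun hx p ⟨_, hpx⟩ => hw ?_
  exact hpx ▸ Set.eq_empty_iff_forall_notMem.2 hx

end addEdge

lemma PartiallyWeaklyCovered.maSet_subset_an {D : Digraph V} {v w : V}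
    (h : PartiallyWeaklyCovered D v w) : maSet D {v} ⊆ an D w :=
  fun _ hs => (mem_maSet_singleton.1 (h.1 hs)).1

lemma ImpliedByTransitivity.maSet_subset_an {D : Digraph V} {v w : V}
    (h : ImpliedByTransitivity D v w) : maSet D {v} ⊆ an D w :=
  fun _ hs => (mem_maSet_singleton.1 hs).1.trans h.1

lemma ImpliedByTransitivity.an_ne_singleton {D : Digraph V} {v w : V}
    (h : ImpliedByTransitivity D v w) : an D w ≠ {w} :=
  fun hw => h.2 (Or.inl (hw ▸ h.1))

lemma PartiallyWeaklyCovered.an_ne_singleton [Finite V] {D : Digraph V} (hD : IsDAG D)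
    {v w : V} (h : PartiallyWeaklyCovered D v w) : an D w ≠ {w} := by
  intro hw
  obtain ⟨s, hsv, hs⟩ := hD.exists_mem_an_eq_singleton v
  have hsw : s ∈ an D w := h.maSet_subset_an (mem_maSet_singleton.2 ⟨hsv, hs⟩)
  rw [hw, Set.mem_singleton_iff] at hsw
  exact h.2.2.1 (hsw ▸ hsv)

theorem maSet_stable_under_addEdge_general [Fintype V] (D : Digraph V) (hD : IsDAG D)
    (v w : V)
    (hvwCov : PartiallyWeaklyCovered D v w ∨ ImpliedByTransitivity D v w) :
    (∀ u : V, maSet (addEdge D v w) {u} = maSet D {u}) ∧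
    sources (addEdge D v w) = sources D := by
  have hw : an D w ≠ {w} := hvwCov.elim (·.an_ne_singleton hD) (·.an_ne_singleton)
  have hvw : maSet D {v} ⊆ an D w := hvwCov.elim (·.maSet_subset_an) (·.maSet_subset_an)
  exact ⟨maSet_addEdge_singleton hw hvw, sources_addEdge (notMem_sources_of_an_ne_singleton hw)⟩

/-- Let `(v, w)` be a nonadjacent pair that is partially
weakly covered or implied by transitivity in the DAG `D`, and let `D̄` be `D`
with the edge `v → w` added.  Then every node has the same set of source-node
ancestors in `D̄` as in `D`; in particular `D` and `D̄` have the same source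
nodes. -/
theorem maSet_stable_under_addEdge [Fintype V] (D : Digraph V) (hD : IsDAG D)
    (v w : V) (hvw : v ≠ w) (hnadj : ¬ Adjacent D v w)
    (hvwCov : PartiallyWeaklyCovered D v w ∨ ImpliedByTransitivity D v w) :
    (∀ u : V, maSet (addEdge D v w) {u} = maSet D {u}) ∧
    sources (addEdge D v w) = sources D :=
  maSet_stable_under_addEdge_general D hD v w hvwCov

end UEC
end
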